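/- For every natural number l and every fixed r' > 0, the function u(t, r) = (4πt)^{−3/2} exp(−(r² + r'²)/(4t)) i_l(r r'/(2t)) satisfies the radial heat equation ∂u/∂t = ∂²u/∂r² + (2/r) ∂u/∂r − (l(l+1)/r²) u for all t > 0 and r > 0; that is, it is annihilated by ∂_t + D_l with V = 0, where D_l = −(1/r²) d/dr (r² d/dr) + l(l+1)/r². -/

import Mathlib

/-!
Write `i_l = z^l g_l` with `g_l = ((1/z) d/dz)^l (sinh z / z)`. The function `sinh z / z` is a
radial eigenfunction, `Δ g = g`, of the Laplacian in dimension `3`, and `(1/z) d/dz` maps radial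
eigenfunctions in dimension `d` to radial eigenfunctions in dimension `d + 2`; so `g_l` is one in
dimension `2l + 3`, and multiplying by `z^l` turns this into the modified spherical Bessel equation
`i'' + (2/z) i' - l(l+1)/z² i = i`. For any solution `f` of that equation, the chain rule reduces
the heat equation for `(4πt)^{-3/2} exp(-(r² + r'²)/(4t)) f(rr'/(2t))` to a polynomial identity
in `r`, `r'`, `t`, `f` and `f'`.
-/

open Real

/-- The operator `f ↦ (z ↦ f′(z)/z)` appearing in Rayleigh's formulas. -/
noncomputable def rayleighOp (f : ℝ → ℝ) : ℝ → ℝ := fun z => deriv f z / z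

/-- Modified spherical Bessel function of the first kind. -/
noncomputable def sphI (l : ℕ) (z : ℝ) : ℝ :=
  z ^ l * (rayleighOp^[l] fun w => Real.sinh w / w) z

/-- `u(t, r) = (4πt)^{-3/2} exp(-(r² + r'²)/(4t)) i_l(r r'/(2t))`. -/
noncomputable def radialKernel (l : ℕ) (r' t r : ℝ) : ℝ :=
  (4 * π * t) ^ (-(3 : ℝ) / 2) *
    Real.exp (-(r ^ 2 + r' ^ 2) / (4 * t)) * sphI l (r * r' / (2 * t))

open Filter Topology
open scoped ContDiff

noncomputable def radialLaplacian (d : ℝ) (f : ℝ → ℝ) (z : ℝ) : ℝ :=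
  deriv (deriv f) z + (d - 1) / z * deriv f z

theorem deriv_deriv_eq_of_radialLaplacian_eq {d : ℝ} {f : ℝ → ℝ} {z c : ℝ}
    (h : radialLaplacian d f z = c) : deriv (deriv f) z = c - (d - 1) / z * deriv f z := by
  rw [← h, radialLaplacian]; ring

section SecondDerivative

variable {g h : ℝ → ℝ} {x : ℝ}

theorem ContDiffAt.eventually_differentiableAt (hg : ContDiffAt ℝ 2 g x) :
    ∀ᶠ y in 𝓝 x, DifferentiableAt ℝ g y :=
  (hg.eventually (by simp)).mono fun _ hy => hy.differentiableAt two_ne_zero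

theorem ContDiffAt.differentiableAt_deriv (hg : ContDiffAt ℝ 2 g x) :
    DifferentiableAt ℝ (deriv g) x :=
  (hg.derivWithin (m := 1) (by norm_num)).differentiableAt one_ne_zero

theorem deriv_deriv_mul (hg : ContDiffAt ℝ 2 g x) (hh : ContDiffAt ℝ 2 h x) :
    deriv (deriv fun y => g y * h y) x =
      deriv (deriv g) x * h x + 2 * (deriv g x * deriv h x) + g x * deriv (deriv h) x := by
  have hderiv : deriv (fun y => g y * h y) =ᶠ[𝓝 x]
      fun y => deriv g y * h y + g y * deriv h y := by
    filter_upwards [hg.eventually_differentiableAt, hh.eventually_differentiableAt] with y hgy hhy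
    exact deriv_mul hgy hhy
  have h2 : HasDerivAt (fun y => deriv g y * h y + g y * deriv h y)
      (deriv (deriv g) x * h x + deriv g x * deriv h x +
        (deriv g x * deriv h x + g x * deriv (deriv h) x)) x :=
    (hg.differentiableAt_deriv.hasDerivAt.mul (hh.differentiableAt two_ne_zero).hasDerivAt).add
      ((hg.differentiableAt two_ne_zero).hasDerivAt.mul hh.differentiableAt_deriv.hasDerivAt)
  rw [hderiv.deriv_eq, h2.deriv]
  ring

theorem deriv_deriv_comp_mul_left (f : ℝ → ℝ) (a x : ℝ) :
    deriv (deriv fun y => f (a * y)) x = a ^ 2 * deriv (deriv f) (a * x) := by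
  have hderiv : deriv (fun y => f (a * y)) = fun y => a * deriv f (a * y) :=
    funext fun y => deriv_comp_mul_left a f y
  simp only [hderiv, deriv_const_mul_field', deriv_comp_mul_left, smul_eq_mul]
  ring

end SecondDerivative

theorem ContDiffOn.contDiffAt_two_of_ne_zero {f : ℝ → ℝ} (hf : ContDiffOn ℝ ∞ f {z | z ≠ 0})
    {z : ℝ} (hz : z ≠ 0) : ContDiffAt ℝ 2 f z :=
  (hf.contDiffAt (isOpen_ne.mem_nhds hz)).of_le (WithTop.coe_le_coe.2 le_top)

theorem contDiffOn_rayleighOp {f : ℝ → ℝ} (hf : ContDiffOn ℝ ∞ f {z | z ≠ 0}) :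
    ContDiffOn ℝ ∞ (rayleighOp f) {z | z ≠ 0} :=
  (hf.deriv_of_isOpen isOpen_ne le_rfl).div contDiffOn_id fun _ hz => hz

theorem radialLaplacian_rayleighOp {f : ℝ → ℝ} {d : ℝ} (hf : ContDiffOn ℝ ∞ f {z | z ≠ 0})
    (hode : ∀ z ≠ 0, radialLaplacian d f z = f z) {z : ℝ} (hz : z ≠ 0) :
    radialLaplacian (d + 2) (rayleighOp f) z = rayleighOp f z := by
  have hderiv : ∀ {w : ℝ}, w ≠ 0 →
      deriv (rayleighOp f) w = f w / w - d * deriv f w / w ^ 2 := by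
    intro w hw
    have h : HasDerivAt (fun z => deriv f z / z) _ w :=
      (hf.contDiffAt_two_of_ne_zero hw).differentiableAt_deriv.hasDerivAt.div (hasDerivAt_id' w) hw
    unfold rayleighOp
    rw [h.deriv, deriv_deriv_eq_of_radialLaplacian_eq (hode w hw)]
    field_simp
    ring
  have hderiv_nhds : deriv (rayleighOp f) =ᶠ[𝓝 z] fun w => f w / w - d * deriv f w / w ^ 2 :=
    (eventually_ne_nhds hz).mono fun _ hw => hderiv hw
  have hf2 := hf.contDiffAt_two_of_ne_zero hz
  have h : HasDerivAt (fun w => f w / w - d * deriv f w / w ^ 2) _ z :=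
    ((hf2.differentiableAt two_ne_zero).hasDerivAt.div (hasDerivAt_id' z) hz).sub
      ((hf2.differentiableAt_deriv.hasDerivAt.const_mul d).div (hasDerivAt_pow 2 z)
        (pow_ne_zero 2 hz))
  rw [radialLaplacian, hderiv_nhds.deriv_eq, h.deriv, hderiv hz,
    deriv_deriv_eq_of_radialLaplacian_eq (hode z hz)]
  unfold rayleighOp
  field_simp
  ring

theorem radialLaplacian_sinh_div {z : ℝ} (hz : z ≠ 0) :
    radialLaplacian 3 (fun w => sinh w / w) z = sinh z / z := by
  have hinv : deriv (fun x : ℝ => x⁻¹) = fun x => -(x ^ 2)⁻¹ := funext fun x => deriv_inv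
  have hinv2 : deriv (deriv fun x : ℝ => x⁻¹) z = 2 / z ^ 3 := by
    have h : HasDerivAt (fun x : ℝ => -(x ^ 2)⁻¹) _ z :=
      ((hasDerivAt_pow 2 z).inv (pow_ne_zero 2 hz)).neg
    rw [hinv, h.deriv]
    field_simp
    ring
  have hquot : (fun w => sinh w / w) = fun w => sinh w * w⁻¹ :=
    funext fun w => div_eq_mul_inv _ _
  rw [hquot, radialLaplacian, deriv_deriv_mul contDiff_sinh.contDiffAt (contDiffAt_inv ℝ hz)]
  simp only [hinv2]
  simp only [deriv_fun_mul differentiableAt_sinh (differentiableAt_inv hz), hinv,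
    Real.deriv_sinh, Real.deriv_cosh]
  field_simp
  ring

theorem contDiffOn_rayleighOp_iterate_sinh_div (l : ℕ) :
    ContDiffOn ℝ ∞ (rayleighOp^[l] fun w => sinh w / w) {z | z ≠ 0} := by
  induction l with
  | zero => exact contDiff_sinh.contDiffOn.div contDiffOn_id fun _ hz => hz
  | succ n ih => rw [Function.iterate_succ_apply']; exact contDiffOn_rayleighOp ih

theorem radialLaplacian_rayleighOp_iterate_sinh_div (l : ℕ) {z : ℝ} (hz : z ≠ 0) :
    radialLaplacian (2 * l + 3) (rayleighOp^[l] fun w => sinh w / w) z =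
      (rayleighOp^[l] fun w => sinh w / w) z := by
  induction l generalizing z with
  | zero => simpa using radialLaplacian_sinh_div hz
  | succ n ih =>
    rw [Function.iterate_succ_apply', Nat.cast_succ,
      show 2 * ((n : ℝ) + 1) + 3 = 2 * n + 3 + 2 by ring]
    exact radialLaplacian_rayleighOp (contDiffOn_rayleighOp_iterate_sinh_div n)
      (fun _ hw => ih hw) hz

theorem radialLaplacian_pow_mul (l : ℕ) {g : ℝ → ℝ} {z : ℝ} (hz : z ≠ 0)
    (hg : ContDiffAt ℝ 2 g z) :
    radialLaplacian 3 (fun w => w ^ l * g w) z - l * (l + 1) / z ^ 2 * (z ^ l * g z) =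
      z ^ l * radialLaplacian (2 * l + 3) g z := by
  have hpow : deriv (fun w : ℝ => w ^ l) = fun w => (l : ℝ) * w ^ (l - 1) :=
    funext fun _ => deriv_pow_field l
  rw [radialLaplacian, radialLaplacian,
    deriv_deriv_mul (g := fun w => w ^ l) (contDiffAt_id.pow l) hg,
    deriv_fun_mul (differentiableAt_pow l) (hg.differentiableAt two_ne_zero), hpow]
  simp only [deriv_const_mul_field', deriv_pow_field]
  rcases l with _ | _ | n
  · simp
  all_goals
    simp only [Nat.add_sub_cancel]
    push_cast
    field_simp
    ring

theorem contDiffAt_sphI (l : ℕ) {z : ℝ} (hz : z ≠ 0) : ContDiffAt ℝ 2 (sphI l) z :=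
  (contDiffAt_id.pow l).mul
    ((contDiffOn_rayleighOp_iterate_sinh_div l).contDiffAt_two_of_ne_zero hz)

theorem radialLaplacian_sphI (l : ℕ) {z : ℝ} (hz : z ≠ 0) :
    radialLaplacian 3 (sphI l) z - l * (l + 1) / z ^ 2 * sphI l z = sphI l z := by
  have h := radialLaplacian_pow_mul l hz
    ((contDiffOn_rayleighOp_iterate_sinh_div l).contDiffAt_two_of_ne_zero hz)
  rwa [radialLaplacian_rayleighOp_iterate_sinh_div l hz] at h

noncomputable def radialGaussian (r' t r : ℝ) : ℝ :=
  (4 * π * t) ^ (-(3 : ℝ) / 2) * exp (-(r ^ 2 + r' ^ 2) / (4 * t))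

noncomputable def radialKernelOf (f : ℝ → ℝ) (r' t r : ℝ) : ℝ :=
  radialGaussian r' t r * f (r * r' / (2 * t))

theorem radialKernel_eq_radialKernelOf (l : ℕ) : radialKernel l = radialKernelOf (sphI l) := rfl

section radialGaussian

variable {r' t r : ℝ}

theorem hasDerivAt_radialGaussian_time (ht : t ≠ 0) :
    HasDerivAt (fun s => radialGaussian r' s r)
      (((r ^ 2 + r' ^ 2) / (4 * t ^ 2) - 3 / (2 * t)) * radialGaussian r' t r) t := by
  have hπt : 4 * π * t ≠ 0 := by positivity
  have hpow : HasDerivAt (fun s => (4 * π * s) ^ (-(3 : ℝ) / 2))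
      (-(3 : ℝ) / 2 * (4 * π * t) ^ (-(3 : ℝ) / 2 - 1) * (4 * π * 1)) t :=
    (hasDerivAt_rpow_const (Or.inl hπt)).comp t ((hasDerivAt_id' t).const_mul (4 * π))
  have hexp : HasDerivAt (fun s => exp (-(r ^ 2 + r' ^ 2) / (4 * s)))
      (exp (-(r ^ 2 + r' ^ 2) / (4 * t)) *
        ((0 * (4 * t) - -(r ^ 2 + r' ^ 2) * (4 * 1)) / (4 * t) ^ 2)) t :=
    ((hasDerivAt_const t _).div ((hasDerivAt_id' t).const_mul 4) (by positivity)).exp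
  refine (hpow.mul hexp).congr_deriv ?_
  rw [radialGaussian, rpow_sub_one hπt]
  field_simp
  ring

theorem hasDerivAt_radialGaussian (r' t r : ℝ) :
    HasDerivAt (radialGaussian r' t) (-(r / (2 * t)) * radialGaussian r' t r) r := by
  have hexp : HasDerivAt (fun σ => exp (-(σ ^ 2 + r' ^ 2) / (4 * t)))
      (exp (-(r ^ 2 + r' ^ 2) / (4 * t)) * (-(2 * r) / (4 * t))) r := by
    simpa using ((hasDerivAt_pow 2 r).add_const (r' ^ 2)).neg.div_const (4 * t) |>.exp
  refine (hexp.const_mul _).congr_deriv ?_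
  rw [radialGaussian]
  ring

theorem deriv_radialGaussian (r' t : ℝ) :
    deriv (radialGaussian r' t) = fun r => -(r / (2 * t)) * radialGaussian r' t r :=
  funext fun r => (hasDerivAt_radialGaussian r' t r).deriv

theorem deriv_deriv_radialGaussian (r' t r : ℝ) :
    deriv (deriv (radialGaussian r' t)) r =
      (r ^ 2 / (4 * t ^ 2) - 1 / (2 * t)) * radialGaussian r' t r := by
  have h : HasDerivAt (fun r => -(r / (2 * t)) * radialGaussian r' t r)
      (-(1 / (2 * t)) * radialGaussian r' t r +
        -(r / (2 * t)) * (-(r / (2 * t)) * radialGaussian r' t r)) r :=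
    ((hasDerivAt_id' r).div_const (2 * t)).neg.mul (hasDerivAt_radialGaussian r' t r)
  rw [deriv_radialGaussian, h.deriv]
  ring

theorem contDiff_radialGaussian (r' t : ℝ) : ContDiff ℝ 2 (radialGaussian r' t) := by
  unfold radialGaussian
  fun_prop

end radialGaussian

section radialKernelOf

variable {f : ℝ → ℝ} {r' t r : ℝ}

theorem hasDerivAt_radialKernelOf_time (ht : t ≠ 0)
    (hf : DifferentiableAt ℝ f (r * r' / (2 * t))) :
    HasDerivAt (fun s => radialKernelOf f r' s r)
      (((r ^ 2 + r' ^ 2) / (4 * t ^ 2) - 3 / (2 * t)) * radialKernelOf f r' t r -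
        r * r' / (2 * t ^ 2) * radialGaussian r' t r * deriv f (r * r' / (2 * t))) t := by
  have harg : HasDerivAt (fun s => r * r' / (2 * s))
      ((0 * (2 * t) - r * r' * (2 * 1)) / (2 * t) ^ 2) t :=
    (hasDerivAt_const t _).div ((hasDerivAt_id' t).const_mul 2) (by positivity)
  have hcomp : HasDerivAt (fun s => f (r * r' / (2 * s))) _ t := hf.hasDerivAt.comp t harg
  refine ((hasDerivAt_radialGaussian_time ht).mul hcomp).congr_deriv ?_
  rw [radialKernelOf]
  field_simp
  ring

theorem radialKernelOf_heat_equation {ν : ℝ} (ht : t ≠ 0) (hr : r ≠ 0) (hr' : r' ≠ 0)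
    (hf : ContDiffAt ℝ 2 f (r * r' / (2 * t)))
    (hode : radialLaplacian 3 f (r * r' / (2 * t)) -
      ν / (r * r' / (2 * t)) ^ 2 * f (r * r' / (2 * t)) = f (r * r' / (2 * t))) :
    deriv (fun s => radialKernelOf f r' s r) t =
      radialLaplacian 3 (radialKernelOf f r' t) r - ν / r ^ 2 * radialKernelOf f r' t r := by
  have hscale : radialKernelOf f r' t = fun σ => radialGaussian r' t σ * f (r' / (2 * t) * σ) :=
    funext fun σ => by rw [radialKernelOf, mul_div_assoc, mul_comm σ]
  have hza : r' / (2 * t) * r = r * r' / (2 * t) := by ring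
  have hfa : ContDiffAt ℝ 2 (fun σ => f (r' / (2 * t) * σ)) r :=
    (hza ▸ hf).comp r (by fun_prop)
  rw [(hasDerivAt_radialKernelOf_time ht (hf.differentiableAt two_ne_zero)).deriv,
    radialLaplacian, hscale, deriv_deriv_mul (contDiff_radialGaussian r' t).contDiffAt hfa,
    deriv_fun_mul (hasDerivAt_radialGaussian r' t r).differentiableAt
      (hfa.differentiableAt two_ne_zero),
    deriv_deriv_comp_mul_left, deriv_comp_mul_left, deriv_deriv_radialGaussian,
    deriv_radialGaussian, hza, deriv_deriv_eq_of_radialLaplacian_eq (eq_add_of_sub_eq hode)]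
  simp only [smul_eq_mul]
  field_simp
  ring

end radialKernelOf

/-- The function `u(t,r) = (4πt)^{-3/2} exp(-(r²+r'²)/(4t)) i_l(rr'/(2t))` satisfies
the radial heat equation `∂u/∂t = ∂²u/∂r² + (2/r) ∂u/∂r - (l(l+1)/r²) u`,
i.e. it is annihilated by `∂_t + D_l` with `V = 0`. -/
theorem radialKernel_heat_equation (l : ℕ) (r' : ℝ) (hr' : 0 < r')
    (t r : ℝ) (ht : 0 < t) (hr : 0 < r) :
    deriv (fun s => radialKernel l r' s r) t =
      deriv (fun ρ => deriv (fun σ => radialKernel l r' t σ) ρ) r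
        + (2 / r) * deriv (fun ρ => radialKernel l r' t ρ) r
        - ((l : ℝ) * ((l : ℝ) + 1) / r ^ 2) * radialKernel l r' t r := by
  have hz : r * r' / (2 * t) ≠ 0 := by positivity
  rw [radialKernel_eq_radialKernelOf, radialKernelOf_heat_equation ht.ne' hr.ne' hr'.ne'
    (contDiffAt_sphI l hz) (radialLaplacian_sphI l hz), radialLaplacian]
  norm_num
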